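/- arXiv:0802.2626 — 2 statements merged into one kernel-verified Lean document; each statement's English description precedes it below -/
import Mathlib

section
/- Let I ⊆ ℝ be an open set with s ≠ 1 for all s ∈ I, and let G : I → ℝ be differentiable with G′(s) = 1/(s³ − 1) for all s ∈ I. Let Ω ⊆ ℝ³ be open with coordinates (x, y, t), and let u : Ω → ℝ be a C² function with u_y ≠ 0 on Ω such that u_t/u_y ∈ I and u_x/u_y ∈ I at every point of Ω, satisfying u_t (u_x³ − u_y³) u_{xy} + u_y (u_t³ − u_x³) u_{xt} + u_x (u_y³ − u_t³) u_{yt} = 0 on Ω. Then ∂_x ( G(u_t/u_y) ) − ∂_t ( G(u_x/u_y) ) = 0 on Ω. -/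
/-!
With coordinates `x, y, t` = `0, 1, 2`, write `a, b, c` for `u_x, u_y, u_t`. By the chain rule and
the symmetry of second derivatives, `∂_x G(c/b) = b (b u_{xt} - c u_{xy}) / (c³ - b³)` and
`∂_t G(a/b) = b (b u_{xt} - a u_{yt}) / (a³ - b³)`; their difference is `-b` times the left-hand
side of the equation divided by `(a³ - b³)(c³ - b³)`.
-/

noncomputable def pd {n : ℕ} (i : Fin n) (f : (Fin n → ℝ) → ℝ) (x : Fin n → ℝ) : ℝ :=
  fderiv ℝ f x (Pi.single i 1)

section PartialDerivatives

variable {n : ℕ}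

lemma hasFDerivAt_pd {u : (Fin n → ℝ) → ℝ} {X : Fin n → ℝ}
    (hu : DifferentiableAt ℝ (fderiv ℝ u) X) (i : Fin n) :
    HasFDerivAt (pd i u)
      ((ContinuousLinearMap.apply ℝ ℝ (Pi.single i 1)).comp (fderiv ℝ (fderiv ℝ u) X)) X := by
  exact (ContinuousLinearMap.apply ℝ ℝ (Pi.single i (1 : ℝ))).hasFDerivAt.comp X hu.hasFDerivAt

lemma pd_pd_eq_fderiv_fderiv {u : (Fin n → ℝ) → ℝ} {X : Fin n → ℝ}
    (hu : DifferentiableAt ℝ (fderiv ℝ u) X) (i j : Fin n) :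
    pd j (pd i u) X = fderiv ℝ (fderiv ℝ u) X (Pi.single j 1) (Pi.single i 1) := by
  rw [pd, (hasFDerivAt_pd hu i).fderiv]
  rfl

lemma ContDiffAt.differentiableAt_fderiv {u : (Fin n → ℝ) → ℝ} {X : Fin n → ℝ}
    (hu : ContDiffAt ℝ 2 u X) : DifferentiableAt ℝ (fderiv ℝ u) X :=
  (hu.fderiv_right (m := 1) (by norm_num)).differentiableAt (by norm_num)

lemma ContDiffAt.pd_pd_comm {u : (Fin n → ℝ) → ℝ} {X : Fin n → ℝ}
    (hu : ContDiffAt ℝ 2 u X) (i j : Fin n) :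
    pd j (pd i u) X = pd i (pd j u) X := by
  rw [pd_pd_eq_fderiv_fderiv hu.differentiableAt_fderiv,
    pd_pd_eq_fderiv_fderiv hu.differentiableAt_fderiv]
  exact hu.isSymmSndFDerivAt (by simp [minSmoothness_of_isRCLikeNormedField]) _ _

lemma pd_comp_div {f g : (Fin n → ℝ) → ℝ} {X : Fin n → ℝ}
    (hf : DifferentiableAt ℝ f X) (hg : DifferentiableAt ℝ g X) (hgX : g X ≠ 0)
    {G : ℝ → ℝ} {G' : ℝ} (hG : HasDerivAt G G' (f X / g X)) (i : Fin n) :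
    pd i (fun Y => G (f Y / g Y)) X = G' * ((pd i f X * g X - f X * pd i g X) / g X ^ 2) := by
  have hinv : HasFDerivAt (fun Y => (g Y)⁻¹) ((-(g X ^ 2)⁻¹) • fderiv ℝ g X) X :=
    (hasDerivAt_inv hgX).comp_hasFDerivAt X hg.hasFDerivAt
  have hdiv : HasFDerivAt (fun Y => f Y / g Y)
      (f X • ((-(g X ^ 2)⁻¹) • fderiv ℝ g X) + (g X)⁻¹ • fderiv ℝ f X) X := by
    simpa only [div_eq_mul_inv] using hf.hasFDerivAt.fun_mul hinv
  have hcomp : HasFDerivAt (fun Y => G (f Y / g Y)) (G' • _) X := hG.comp_hasFDerivAt X hdiv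
  rw [pd, hcomp.fderiv]
  simp only [pd, smul_apply, add_apply, smul_eq_mul]
  field_simp
  ring

end PartialDerivatives

lemma pow_three_sub_one_ne_zero {s : ℝ} (hs : s ≠ 1) : s ^ 3 - 1 ≠ 0 := by
  have hq : 0 < s ^ 2 + s + 1 := by nlinarith [sq_nonneg (2 * s + 1)]
  intro h
  exact mul_ne_zero (sub_ne_zero.2 hs) hq.ne' (by linear_combination h)

lemma conservation_law_algebra {a b c uxy uxt uyt : ℝ} (hb : b ≠ 0)
    (ha : a / b ≠ 1) (hc : c / b ≠ 1)
    (heq : c * (a ^ 3 - b ^ 3) * uxy + b * (c ^ 3 - a ^ 3) * uxt + a * (b ^ 3 - c ^ 3) * uyt = 0) :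
    1 / ((c / b) ^ 3 - 1) * ((uxt * b - c * uxy) / b ^ 2)
      - 1 / ((a / b) ^ 3 - 1) * ((uxt * b - a * uyt) / b ^ 2) = 0 := by
  have hb3 : b ^ 3 ≠ 0 := pow_ne_zero 3 hb
  have hab : a ^ 3 - b ^ 3 ≠ 0 := by
    simpa [div_pow, div_sub_one hb3, hb3] using pow_three_sub_one_ne_zero ha
  have hcb : c ^ 3 - b ^ 3 ≠ 0 := by
    simpa [div_pow, div_sub_one hb3, hb3] using pow_three_sub_one_ne_zero hc
  rw [div_pow, div_pow, div_sub_one hb3, div_sub_one hb3]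
  field_simp
  linear_combination (-b) * heq

theorem degenerate_elliptic_equation_G_conservation_law_general
    (I : Set ℝ) (hI1 : ∀ s ∈ I, s ≠ 1)
    (G : ℝ → ℝ) (hG : ∀ s ∈ I, HasDerivAt G (1 / (s ^ 3 - 1)) s)
    (Ω : Set (Fin 3 → ℝ)) (hΩ : IsOpen Ω)
    (u : (Fin 3 → ℝ) → ℝ) (hu : ContDiffOn ℝ 2 u Ω)
    (huy : ∀ X ∈ Ω, pd 1 u X ≠ 0)
    (hmem1 : ∀ X ∈ Ω, pd 2 u X / pd 1 u X ∈ I)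
    (hmem2 : ∀ X ∈ Ω, pd 0 u X / pd 1 u X ∈ I)
    (heq : ∀ X ∈ Ω,
      pd 2 u X * ((pd 0 u X) ^ 3 - (pd 1 u X) ^ 3) * pd 1 (pd 0 u) X
        + pd 1 u X * ((pd 2 u X) ^ 3 - (pd 0 u X) ^ 3) * pd 2 (pd 0 u) X
        + pd 0 u X * ((pd 1 u X) ^ 3 - (pd 2 u X) ^ 3) * pd 2 (pd 1 u) X = 0) :
    ∀ X ∈ Ω,
      pd 0 (fun Y => G (pd 2 u Y / pd 1 u Y)) X
        - pd 2 (fun Y => G (pd 0 u Y / pd 1 u Y)) X = 0 := by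
  intro X hX
  have hu2 : ContDiffAt ℝ 2 u X := hu.contDiffAt (hΩ.mem_nhds hX)
  have hpd : ∀ i, DifferentiableAt ℝ (pd i u) X := fun i =>
    (hasFDerivAt_pd hu2.differentiableAt_fderiv i).differentiableAt
  rw [pd_comp_div (hpd 2) (hpd 1) (huy X hX) (hG _ (hmem1 X hX)),
    pd_comp_div (hpd 0) (hpd 1) (huy X hX) (hG _ (hmem2 X hX)),
    hu2.pd_pd_comm 2 0, hu2.pd_pd_comm 1 0]
  exact conservation_law_algebra (huy X hX) (hI1 _ (hmem2 X hX)) (hI1 _ (hmem1 X hX)) (heq X hX)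

/-- If `G′(s) = 1/(s³−1)` on an open set `I` avoiding `1`, then every solution of
`u_t(u_x³−u_y³)u_{xy} + u_y(u_t³−u_x³)u_{xt} + u_x(u_y³−u_t³)u_{yt} = 0`
with `u_y ≠ 0` and ratios `u_t/u_y, u_x/u_y ∈ I` satisfies the conservation law
`(G(u_t/u_y))_x − (G(u_x/u_y))_t = 0`.
Coordinates on `ℝ³` are `x = 0`, `y = 1`, `t = 2`. -/
theorem degenerate_elliptic_equation_G_conservation_law
    (I : Set ℝ) (hI : IsOpen I) (hI1 : ∀ s ∈ I, s ≠ 1)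
    (G : ℝ → ℝ) (hG : ∀ s ∈ I, HasDerivAt G (1 / (s ^ 3 - 1)) s)
    (Ω : Set (Fin 3 → ℝ)) (hΩ : IsOpen Ω)
    (u : (Fin 3 → ℝ) → ℝ) (hu : ContDiffOn ℝ 2 u Ω)
    (huy : ∀ X ∈ Ω, pd 1 u X ≠ 0)
    (hmem1 : ∀ X ∈ Ω, pd 2 u X / pd 1 u X ∈ I)
    (hmem2 : ∀ X ∈ Ω, pd 0 u X / pd 1 u X ∈ I)
    (heq : ∀ X ∈ Ω,
      pd 2 u X * ((pd 0 u X) ^ 3 - (pd 1 u X) ^ 3) * pd 1 (pd 0 u) X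
        + pd 1 u X * ((pd 2 u X) ^ 3 - (pd 0 u X) ^ 3) * pd 2 (pd 0 u) X
        + pd 0 u X * ((pd 1 u X) ^ 3 - (pd 2 u X) ^ 3) * pd 2 (pd 1 u) X = 0) :
    ∀ X ∈ Ω,
      pd 0 (fun Y => G (pd 2 u Y / pd 1 u Y)) X
        - pd 2 (fun Y => G (pd 0 u Y / pd 1 u Y)) X = 0 :=
  degenerate_elliptic_equation_G_conservation_law_general I hI1 G hG Ω hΩ u hu huy hmem1 hmem2 heq
end

section
/- Let Ω ⊆ ℝ³ be open with coordinates (x, y, t), and let u, S : Ω → ℝ be C² functions with u_x ≠ 0 and S_x ≠ 0 on Ω, satisfying the linear Lax pair relations u_x S_t = (1 − e^{−u_t}) S_x and u_x S_y = e^{−u_t} u_y S_x on Ω. Then u satisfies the dispersionless Toda singular manifold equation u_x u_y u_{tt} = (e^{u_t} − 1)(1 − e^{−u_t}) u_{xy} on Ω. -/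
/-!
Solve the Lax pair as `u_x S_t = a S_x`, `u_x S_y = b S_x` with `a = 1 − e^{−u_t}` and
`b = e^{−u_t} u_y`. Differentiating both relations and using `S_{ty} = S_{yt}`, the second
derivatives of `S` cancel, and dividing by `u_x S_x` leaves the first-order compatibility
condition `u_x (a_y − b_t) + a b_x − b a_x + b u_{xt} − a u_{xy} = 0`. With the chosen `a`, `b`
this is `e^{−u_t} u_x u_y u_{tt} − (1 − e^{−u_t})² u_{xy} = 0`, i.e. the dispersionless Toda
singular manifold equation.
-/

open Filter Topology

section PartialDerivative

variable {n : ℕ} {f g h k : (Fin n → ℝ) → ℝ} {X : Fin n → ℝ}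

theorem pd_congr_of_eventuallyEq (h : f =ᶠ[𝓝 X] g) (i : Fin n) : pd i f X = pd i g X := by
  rw [pd, pd, h.fderiv_eq]

theorem pd_mul (hf : DifferentiableAt ℝ f X) (hg : DifferentiableAt ℝ g X) (i : Fin n) :
    pd i (fun Y => f Y * g Y) X = pd i f X * g X + f X * pd i g X := by
  simp only [pd, fderiv_fun_mul hf hg, add_apply, smul_apply, smul_eq_mul]
  ring

theorem pd_const_sub (c : ℝ) (i : Fin n) : pd i (fun Y => c - f Y) X = -pd i f X := by
  simp only [pd, fderiv_const_sub, neg_apply]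

theorem pd_neg (i : Fin n) : pd i (fun Y => -f Y) X = -pd i f X := by
  simp only [pd, fderiv_fun_neg, neg_apply]

theorem pd_exp (hf : DifferentiableAt ℝ f X) (i : Fin n) :
    pd i (fun Y => Real.exp (f Y)) X = Real.exp (f X) * pd i f X := by
  simp only [pd, fderiv_exp hf, smul_apply, smul_eq_mul]

theorem differentiableAt_pd (hf : ContDiffAt ℝ 2 f X) (i : Fin n) :
    DifferentiableAt ℝ (pd i f) X :=
  ((hf.fderiv_right le_rfl).differentiableAt one_ne_zero).clm_apply (differentiableAt_const _)

theorem pd_pd (hf : ContDiffAt ℝ 2 f X) (i j : Fin n) :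
    pd i (pd j f) X = fderiv ℝ (fderiv ℝ f) X (Pi.single i 1) (Pi.single j 1) := by
  have hf' := (hf.fderiv_right le_rfl).differentiableAt one_ne_zero
  change fderiv ℝ (fun Y => fderiv ℝ f Y (Pi.single j 1)) X (Pi.single i 1) = _
  simp [fderiv_clm_apply hf' (differentiableAt_const _)]

theorem pd_comm (hf : ContDiffAt ℝ 2 f X) (i j : Fin n) :
    pd i (pd j f) X = pd j (pd i f) X := by
  rw [pd_pd hf, pd_pd hf]
  exact (hf.isSymmSndFDerivAt (by simp)).eq _ _

theorem pd_mul_eq_of_eventuallyEq (hf : DifferentiableAt ℝ f X) (hg : DifferentiableAt ℝ g X)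
    (hh : DifferentiableAt ℝ h X) (hk : DifferentiableAt ℝ k X)
    (heq : ∀ᶠ Y in 𝓝 X, f Y * g Y = h Y * k Y) (l : Fin n) :
    pd l f X * g X + f X * pd l g X = pd l h X * k X + h X * pd l k X := by
  rw [← pd_mul hf hg, ← pd_mul hh hk]
  exact pd_congr_of_eventuallyEq heq l

end PartialDerivative

theorem lax_pair_compatibility {n : ℕ} {S p a b : (Fin n → ℝ) → ℝ} {X : Fin n → ℝ}
    {i j k : Fin n} (hS : ContDiffAt ℝ 2 S X) (hp : DifferentiableAt ℝ p X)
    (ha : DifferentiableAt ℝ a X) (hb : DifferentiableAt ℝ b X)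
    (hpX : p X ≠ 0) (hSX : pd i S X ≠ 0)
    (hk : ∀ᶠ Y in 𝓝 X, p Y * pd k S Y = a Y * pd i S Y)
    (hj : ∀ᶠ Y in 𝓝 X, p Y * pd j S Y = b Y * pd i S Y) :
    p X * (pd j a X - pd k b X) + a X * pd i b X - b X * pd i a X
      + b X * pd k p X - a X * pd j p X = 0 := by
  have hSi := differentiableAt_pd hS i
  have hSj := differentiableAt_pd hS j
  have hSk := differentiableAt_pd hS k
  have ekj := pd_mul_eq_of_eventuallyEq hp hSk ha hSi hk j
  have ejk := pd_mul_eq_of_eventuallyEq hp hSj hb hSi hj k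
  have eki := pd_mul_eq_of_eventuallyEq hp hSk ha hSi hk i
  have eji := pd_mul_eq_of_eventuallyEq hp hSj hb hSi hj i
  rw [pd_comm hS j k] at ekj
  rw [pd_comm hS i k] at eki
  rw [pd_comm hS i j] at eji
  refine (mul_eq_zero.mp ?_).resolve_left (mul_ne_zero hpX hSX)
  -- `S_{jk}`, `S_{ik}`, `S_{ij}` and `S_{ii}` all cancel in this combination
  linear_combination (-p X) * (p X * (ekj - ejk) + a X * eji - b X * eki)
    + (p X * pd j p X - pd i p X * b X) * hk.self_of_nhds
    + (pd i p X * a X - p X * pd k p X) * hj.self_of_nhds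

/-- Coordinates on `ℝ³` are `x = 0`, `y = 1`, `t = 2`. -/
theorem linear_lax_pair_implies_dToda
    (Ω : Set (Fin 3 → ℝ)) (hΩ : IsOpen Ω)
    (u S : (Fin 3 → ℝ) → ℝ)
    (hu : ContDiffOn ℝ 2 u Ω) (hS : ContDiffOn ℝ 2 S Ω)
    (hux : ∀ X ∈ Ω, pd 0 u X ≠ 0) (hSx : ∀ X ∈ Ω, pd 0 S X ≠ 0)
    (hLax1 : ∀ X ∈ Ω,
      pd 0 u X * pd 2 S X = (1 - Real.exp (-(pd 2 u X))) * pd 0 S X)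
    (hLax2 : ∀ X ∈ Ω,
      pd 0 u X * pd 1 S X = Real.exp (-(pd 2 u X)) * pd 1 u X * pd 0 S X) :
    ∀ X ∈ Ω,
      pd 0 u X * pd 1 u X * pd 2 (pd 2 u) X
        = (Real.exp (pd 2 u X) - 1) * (1 - Real.exp (-(pd 2 u X))) * pd 1 (pd 0 u) X := by
  intro X hX
  have hΩX : Ω ∈ 𝓝 X := hΩ.mem_nhds hX
  have hu2 : ContDiffAt ℝ 2 u X := hu.contDiffAt hΩX
  have hut := differentiableAt_pd hu2 2
  have huy := differentiableAt_pd hu2 1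
  have hE : DifferentiableAt ℝ (fun Y => Real.exp (-(pd 2 u Y))) X := hut.fun_neg.exp
  have hcompat := lax_pair_compatibility (hS.contDiffAt hΩX) (differentiableAt_pd hu2 0)
    (a := fun Y => 1 - Real.exp (-(pd 2 u Y))) (b := fun Y => Real.exp (-(pd 2 u Y)) * pd 1 u Y)
    (hE.const_sub 1) (hE.mul huy) (hux X hX) (hSx X hX)
    (eventually_of_mem hΩX hLax1) (eventually_of_mem hΩX hLax2)
  simp only [pd_const_sub, pd_mul hE huy, pd_exp hut.fun_neg, pd_neg] at hcompat
  rw [pd_comm hu2 1 2, pd_comm hu2 0 1, pd_comm hu2 0 2] at hcompat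
  have hexp : Real.exp (pd 2 u X) * Real.exp (-(pd 2 u X)) = 1 := by
    rw [← Real.exp_add, add_neg_cancel, Real.exp_zero]
  linear_combination Real.exp (pd 2 u X) * hcompat
    - (pd 0 u X * pd 1 u X * pd 2 (pd 2 u) X
      + (1 - Real.exp (-(pd 2 u X))) * pd 1 (pd 0 u) X) * hexp
end
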